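/- Let W be a finite Coxeter group, let u, w ∈ W, let v = U_{w⁻¹} ↓ u, let m = u v⁻¹, and let v = s_1 ··· s_k be a reduced expression (so k = ℓ(v)). Then: (1) ℓ(wv) = ℓ(w) + ℓ(v); (2) { z ∈ W : u ≤ z and z v⁻¹ ≤ w } equals the Bruhat interval [u, wv]; (3) w < w s_1 < w s_1 s_2 < ··· < w s_1 ··· s_k = wv; (4) for every z ∈ [u, wv], z > z s_k > z s_k s_{k−1} > ··· > z s_k ··· s_1 = z v⁻¹; (5) for every z ∈ [u, wv] and every 0 ≤ r ≤ k, u s_k ··· s_{r+1} = m s_1 ··· s_r ≤ z s_k ··· s_{r+1} ≤ w s_1 ··· s_r (where for r = k the products s_k ··· s_{k+1} and s_1 ··· s_k are interpreted as the identity and v respectively). -/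

import Mathlib

open Polynomial

namespace PaperBase

variable {B : Type*} {W : Type*} [Group W] {M : CoxeterMatrix B} (cs : CoxeterSystem M W)

/-- The strong Bruhat order: `u ≤ w` iff some reduced word for `w` has a sublist that is a
reduced word for `u`. -/
def BruhatLE (u w : W) : Prop :=
  ∃ ω : List B, cs.IsReduced ω ∧ cs.wordProd ω = w ∧
    ∃ ω' : List B, ω'.Sublist ω ∧ cs.IsReduced ω' ∧ cs.wordProd ω' = u

/-- The strict strong Bruhat order. -/
def BruhatLT (u w : W) : Prop := BruhatLE cs u w ∧ u ≠ w

/-- The right weak Bruhat order: `u ≤_R w` iff `ℓ(w) = ℓ(u) + ℓ(u⁻¹ w)`. -/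
def RWeakLE (u w : W) : Prop := cs.length w = cs.length u + cs.length (u⁻¹ * w)

/-- `U_ω ↑ v` along a word `ω`. -/
noncomputable def upLWord (ω : List B) (v : W) : W :=
  ω.foldr (fun i x => if cs.length x < cs.length (cs.simple i * x) then cs.simple i * x else x) v

/-- `U_ω ↓ v` along a word `ω`. -/
noncomputable def downLWord (ω : List B) (v : W) : W :=
  ω.foldr (fun i x => if cs.length (cs.simple i * x) < cs.length x then cs.simple i * x else x) v

/-- `v ↑ U_ω` along a word `ω`. -/
noncomputable def upRWord (v : W) (ω : List B) : W :=
  ω.foldl (fun x i => if cs.length x < cs.length (x * cs.simple i) then x * cs.simple i else x) v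

/-- `v ↓ U_ω` along a word `ω`. -/
noncomputable def downRWord (v : W) (ω : List B) : W :=
  ω.foldl (fun x i => if cs.length (x * cs.simple i) < cs.length x then x * cs.simple i else x) v

/-- A chosen reduced word for `w`. -/
noncomputable def rword (w : W) : List B := (cs.exists_reduced_word' w).choose

theorem rword_isReduced (w : W) : cs.IsReduced (rword cs w) :=
  (cs.exists_reduced_word' w).choose_spec.1

theorem rword_wordProd (w : W) : cs.wordProd (rword cs w) = w :=
  ((cs.exists_reduced_word' w).choose_spec.2).symm

/-- `U_w ↑ v` for `w : W`, computed along a chosen reduced word for `w`. -/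
noncomputable def upL (w v : W) : W := upLWord cs (rword cs w) v

/-- `U_w ↓ v` for `w : W`. -/
noncomputable def downL (w v : W) : W := downLWord cs (rword cs w) v

/-- `v ↑ U_w` for `w : W`. -/
noncomputable def upR (v w : W) : W := upRWord cs v (rword cs w)

/-- `v ↓ U_w` for `w : W`. -/
noncomputable def downR (v w : W) : W := downRWord cs v (rword cs w)

/-- The Demazure (0-Hecke) product `u ∘ w`. -/
noncomputable def dem (u w : W) : W := upRWord cs u (rword cs w)

/-- Left multiplication by the Hecke algebra generator `T_{s i}` on the free
`ℤ[q]`-module with basis `{T_w}`, realized as `W →₀ ℤ[q]`: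
`T_s T_w = T_{sw}` if `sw > w`, and `T_s T_w = (q-1) T_w + q T_{sw}` if `sw < w`. -/
noncomputable def heckeMulSimple (i : B) (f : W →₀ Polynomial ℤ) : W →₀ Polynomial ℤ :=
  f.sum fun w c =>
    if cs.length w < cs.length (cs.simple i * w)
    then Finsupp.single (cs.simple i * w) c
    else Finsupp.single w ((X - 1) * c) + Finsupp.single (cs.simple i * w) (X * c)

/-- Left multiplication by `T_{π ω}` along a word `ω`. -/
noncomputable def heckeMulWord (ω : List B) (f : W →₀ Polynomial ℤ) : W →₀ Polynomial ℤ :=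
  ω.foldr (heckeMulSimple cs) f

/-- The product `T_x T_y` in the Hecke algebra, expanded in the basis `{T_w}`. -/
noncomputable def TT (x y : W) : W →₀ Polynomial ℤ :=
  heckeMulWord cs (rword cs x) (Finsupp.single y 1)

open Classical in
/-- The linear functional `Λ_w` with `Λ_w (T_y) = q^{ℓ(y)}` if `y ≤ w`, else `0`. -/
noncomputable def Lam (w : W) (f : W →₀ Polynomial ℤ) : Polynomial ℤ :=
  f.sum fun y c => if BruhatLE cs y w then X ^ cs.length y * c else 0

/-- `Θ(x, y, w) = Λ_w (T_x T_{y⁻¹})`. -/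
noncomputable def Theta (x y w : W) : Polynomial ℤ := Lam cs w (TT cs x y⁻¹)



open CoxeterSystem List

local prefix:100 "s" => cs.simple
local prefix:100 "π" => cs.wordProd
local prefix:100 "ℓ" => cs.length
local prefix:100 "ris" => cs.rightInvSeq

theorem ris_cons (i : B) (ω : List B) :
    ris (i :: ω) = ((π ω)⁻¹ * s i * π ω) :: ris ω := rfl

theorem ris_append (ω₁ ω₂ : List B) :
    ris (ω₁ ++ ω₂) = (ris ω₁).map (fun t => (π ω₂)⁻¹ * t * π ω₂) ++ ris ω₂ := by
  induction ω₁ with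
  | nil => simp
  | cons i ω₁ ih =>
      rw [cons_append, ris_cons, ris_cons, ih, map_cons, cons_append]
      congr 1
      rw [cs.wordProd_append, mul_inv_rev]
      simp [mul_assoc]

theorem simple_conj_eq_iff (i : B) (x : W) : (s i * x * s i = s i) ↔ x = s i := by
  have hss := cs.simple_mul_simple_self i
  constructor
  · intro h
    have h1 : s i * (s i * x * s i) * s i = x := by
      calc s i * (s i * x * s i) * s i = (s i * s i) * x * (s i * s i) := by
            simp only [mul_assoc]
        _ = x := by rw [hss]; simp
    have h' : s i * (s i * x * s i) * s i = s i * s i * s i := by rw [h]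
    rw [h1, hss] at h'
    simpa using h'
  · intro h
    rw [h]
    rw [hss, one_mul]

/-- A chosen reduced word for `w`. -/
noncomputable def rword' (w : W) : List B := (cs.exists_reduced_word' w).choose

theorem rword'_isReduced (w : W) : cs.IsReduced (rword' cs w) :=
  (cs.exists_reduced_word' w).choose_spec.1

theorem rword'_wordProd (w : W) : cs.wordProd (rword' cs w) = w :=
  ((cs.exists_reduced_word' w).choose_spec.2).symm


section SignedPermutation

variable [DecidableEq W]

/-- The sign permutation attached to a simple reflection. -/
def mu (i : B) : Equiv.Perm (W × ℤˣ) := by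
  refine Function.Involutive.toPerm
    (fun p => (s i * p.1 * s i, if p.1 = s i then -p.2 else p.2)) ?_
  intro ⟨x, e⟩
  have hss := cs.simple_mul_simple_self i
  have h1 : s i * (s i * x * s i) * s i = x := by
    calc s i * (s i * x * s i) * s i = (s i * s i) * x * (s i * s i) := by
          simp only [mul_assoc]
      _ = x := by rw [hss]; simp
  simp only [h1, simple_conj_eq_iff cs]
  by_cases hx : x = s i <;> simp [hx]

theorem mu_apply (i : B) (x : W) (e : ℤˣ) :
    mu cs i (x, e) = (s i * x * s i, if x = s i then -e else e) := rfl

/-- The product of sign permutations along a word. -/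
def muProd (ω : List B) : Equiv.Perm (W × ℤˣ) := (ω.map (mu cs)).prod

theorem muProd_nil : muProd cs ([] : List B) = 1 := rfl

theorem muProd_cons (i : B) (ω : List B) :
    muProd cs (i :: ω) = mu cs i * muProd cs ω := by
  simp [muProd]

theorem muProd_apply (ω : List B) (x : W) (e : ℤˣ) :
    muProd cs ω (x, e) = (π ω * x * (π ω)⁻¹, (-1 : ℤˣ) ^ ((ris ω).count x) * e) := by
  induction ω generalizing e with
  | nil => simp [muProd_nil]
  | cons i ω ih =>
      rw [muProd_cons]
      have hstep : (mu cs i * muProd cs ω) (x, e) = mu cs i (muProd cs ω (x, e)) := rfl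
      rw [hstep, ih, mu_apply, ris_cons, cs.wordProd_cons]
      have hiff : (π ω * x * (π ω)⁻¹ = s i) ↔ (x = (π ω)⁻¹ * s i * π ω) := by
        constructor
        · intro h; rw [← h]; group
        · intro h; rw [h]; group
      simp only [Prod.mk.injEq]
      refine ⟨?_, ?_⟩
      · rw [mul_inv_rev, cs.inv_simple]
        simp [mul_assoc]
      · simp only [List.count_cons]
        by_cases hx : x = (π ω)⁻¹ * s i * π ω
        · rw [if_pos (hiff.mpr hx)]
          simp only [hx, beq_self_eq_true, if_true, pow_succ]
          rw [mul_neg_one, neg_mul]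
        · rw [if_neg (fun h => hx (hiff.mp h))]
          have hx' : ((π ω)⁻¹ * s i * π ω) ≠ x := fun h => hx h.symm
          simp [hx']

theorem ris_alternatingWord (i j : B) :
    ∀ N k, k < N →
      (ris (CoxeterSystem.alternatingWord i j N)).getD k 1
        = (s j * s i) ^ (N - 1 - k) * s j := by
  intro N
  induction N with
  | zero => omega
  | succ N ihN =>
      intro k hk
      rw [CoxeterSystem.alternatingWord_succ' i j N]
      cases k with
      | succ k =>
          rw [ris_cons, List.getD_cons_succ]
          rw [ihN k (by omega)]
          congr 2
          omega
      | zero =>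
          rw [ris_cons, List.getD_cons_zero]
          have hr : (s i * s j)⁻¹ = s j * s i := by
            rw [mul_inv_rev, cs.inv_simple, cs.inv_simple]
          have hsemi : ∀ c : ℕ, s j * (s i * s j) ^ c = (s j * s i) ^ c * s j := by
            intro c
            have hS : SemiconjBy (s j) (s i * s j) (s j * s i) := by
              unfold SemiconjBy
              group
            exact (hS.pow_right c)
          rw [cs.prod_alternatingWord_eq_mul_pow i j N]
          rcases Nat.even_or_odd N with hN | hN
          · have hEv := hN
            obtain ⟨c, hc⟩ := hN
            have hNc : N / 2 = c := by omega
            rw [if_pos hEv, if_pos hEv, one_mul, hNc]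
            have he : N + 1 - 1 - 0 = c + c := by omega
            rw [he]
            calc ((s i * s j) ^ c)⁻¹ * s j * (s i * s j) ^ c
                = ((s i * s j) ^ c)⁻¹ * (s j * (s i * s j) ^ c) := by group
              _ = ((s i * s j) ^ c)⁻¹ * ((s j * s i) ^ c * s j) := by rw [hsemi]
              _ = ((s i * s j) ^ c)⁻¹ * (((s i * s j) ^ c)⁻¹ * s j) := by
                  rw [← inv_pow, hr]
              _ = (((s i * s j) ^ c) * ((s i * s j) ^ c))⁻¹ * s j := by group
              _ = ((s i * s j) ^ (c + c))⁻¹ * s j := by rw [pow_add]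
              _ = (s j * s i) ^ (c + c) * s j := by rw [← inv_pow, hr]
          · have hN' : ¬ Even N := Nat.not_even_iff_odd.mpr hN
            obtain ⟨c, hc⟩ := hN
            have hNc : N / 2 = c := by omega
            rw [if_neg hN', if_neg hN', hNc]
            have he : N + 1 - 1 - 0 = c + (c + 1) := by omega
            rw [he]
            calc (s j * (s i * s j) ^ c)⁻¹ * s i * (s j * (s i * s j) ^ c)
                = ((s i * s j) ^ c)⁻¹ * ((s j * s i) * (s j * (s i * s j) ^ c)) := by
                  rw [mul_inv_rev, cs.inv_simple]
                  group
              _ = ((s i * s j) ^ c)⁻¹ * ((s j * s i) * ((s j * s i) ^ c * s j)) := by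
                  rw [hsemi]
              _ = (s j * s i) ^ c * ((s j * s i) * ((s j * s i) ^ c * s j)) := by
                  rw [← inv_pow, hr]
              _ = (s j * s i) ^ (c + (c + 1)) * s j := by
                  rw [pow_add, pow_succ']
                  group

theorem even_count_ris_braidWord (i j : B) (x : W) :
    Even ((ris (CoxeterSystem.alternatingWord i j (2 * M i j))).count x) := by
  set m := M i j with hm
  set L := ris (CoxeterSystem.alternatingWord i j (2 * m)) with hL
  have hlen : L.length = 2 * m := by
    rw [hL, cs.length_rightInvSeq, CoxeterSystem.length_alternatingWord]
  have hpow : (s j * s i) ^ m = 1 := cs.simple_mul_simple_pow' i j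
  have htd : L.take m = L.drop m := by
    apply List.ext_getElem
    · simp [hlen]
      omega
    · intro k h1 h2
      have hk : k < m := by simp [hlen] at h1; omega
      rw [List.getElem_take, List.getElem_drop]
      have g1 : L[k] = L.getD k 1 := by
        rw [List.getD_eq_getElem]
      have g2 : L[m + k] = L.getD (m + k) 1 := by
        rw [List.getD_eq_getElem]
      rw [g1, g2, hL, ris_alternatingWord cs i j (2 * m) k (by omega),
        ris_alternatingWord cs i j (2 * m) (m + k) (by omega)]
      have e1 : 2 * m - 1 - k = m + (2 * m - 1 - (m + k)) := by omega
      rw [e1, pow_add, hpow, one_mul]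
  have hsplit : L = L.take m ++ L.drop m := (List.take_append_drop m L).symm
  rw [hsplit, List.count_append, ← htd]
  exact ⟨(L.take m).count x, by omega⟩

theorem mu_braid (i j : B) : (mu cs i * mu cs j) ^ M i j = 1 := by
  have halt : ∀ m : ℕ, muProd cs (CoxeterSystem.alternatingWord i j (2 * m))
      = (mu cs i * mu cs j) ^ m := by
    intro m
    induction m with
    | zero => simp [CoxeterSystem.alternatingWord, muProd]
    | succ m ih =>
        have h2 : 2 * (m + 1) = (2 * m + 1) + 1 := by omega
        rw [h2, CoxeterSystem.alternatingWord_succ', CoxeterSystem.alternatingWord_succ']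
        have ho : ¬ Even (2 * m + 1) := by simp [Nat.even_add_one]
        have he : Even (2 * m) := ⟨m, by omega⟩
        rw [if_neg ho, if_pos he]
        rw [muProd_cons, muProd_cons, ih, pow_succ']
        rw [mul_assoc]
  have key := halt (M i j)
  apply Equiv.ext
  rintro ⟨x, e⟩
  rw [← key]
  rw [muProd_apply]
  have hπ : π (CoxeterSystem.alternatingWord i j (2 * M i j)) = 1 := by
    rw [cs.prod_alternatingWord_eq_mul_pow]
    have he : Even (2 * M i j) := ⟨M i j, by omega⟩
    rw [if_pos he, one_mul]
    have : 2 * M i j / 2 = M i j := by omega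
    rw [this, cs.simple_mul_simple_pow]
  rw [hπ]
  have hev := even_count_ris_braidWord cs i j x
  rw [Even.neg_one_pow hev]
  simp

/-- The sign representation `W →* Perm (W × ℤˣ)`. -/
noncomputable def nuF : W →* Equiv.Perm (W × ℤˣ) :=
  cs.lift ⟨fun i => mu cs i, fun i j => mu_braid cs i j⟩

theorem nuF_simple (i : B) : nuF cs (s i) = mu cs i :=
  cs.lift_apply_simple (fun i j => mu_braid cs i j) i

theorem nuF_wordProd (ω : List B) : nuF cs (π ω) = muProd cs ω := by
  induction ω with
  | nil => simp [muProd_nil, cs.wordProd_nil]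
  | cons a ω ih =>
      rw [cs.wordProd_cons, map_mul, ih, nuF_simple, muProd_cons]

/-- The parity of the number of occurrences of `t` in the right inversion sequence only
depends on the product of the word. -/
theorem count_ris_parity {ω ω' : List B} (h : π ω = π ω') (t : W) :
    (Odd ((ris ω).count t) ↔ Odd ((ris ω').count t)) := by
  have h1 : muProd cs ω (t, 1) = muProd cs ω' (t, 1) := by
    rw [← nuF_wordProd, ← nuF_wordProd, h]
  rw [muProd_apply, muProd_apply, h] at h1
  have h2 : ((-1 : ℤˣ) ^ ((ris ω).count t) : ℤˣ) = (-1 : ℤˣ) ^ ((ris ω').count t) := by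
    have := congrArg Prod.snd h1
    simpa using this
  constructor
  · intro ho
    by_contra hc
    rw [Odd.neg_one_pow ho, Even.neg_one_pow ((Nat.even_or_odd _).resolve_right hc)] at h2
    exact (by decide : ((-1 : ℤˣ) ≠ 1)) h2
  · intro ho
    by_contra hc
    rw [Odd.neg_one_pow ho, Even.neg_one_pow ((Nat.even_or_odd _).resolve_right hc)] at h2
    exact (by decide : ((-1 : ℤˣ) ≠ 1)) h2.symm


/-- Sign cocycle. -/
noncomputable def sgnc (g x : W) : ℤˣ := (-1) ^ ((ris (rword' cs g)).count x)

theorem nuF_apply (g x : W) (e : ℤˣ) :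
    nuF cs g (x, e) = (g * x * g⁻¹, sgnc cs g x * e) := by
  conv_lhs => rw [← rword'_wordProd cs g]
  rw [nuF_wordProd, muProd_apply, rword'_wordProd]
  rfl

theorem sgnc_neg_odd {g x : W} (h : sgnc cs g x = -1) :
    Odd ((ris (rword' cs g)).count x) := by
  rcases Nat.even_or_odd ((ris (rword' cs g)).count x) with he | ho
  · exfalso
    rw [sgnc, Even.neg_one_pow he] at h
    exact (by decide : ((1 : ℤˣ) ≠ -1)) h
  · exact ho

theorem sgnc_refl_self {t : W} (ht : cs.IsReflection t) : sgnc cs t t = -1 := by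
  obtain ⟨y, a, hya⟩ := ht
  have hinv : y⁻¹ * t * y = s a := by rw [hya]; group
  have h1 : nuF cs (y⁻¹) (t, 1) = (s a, sgnc cs y⁻¹ t * 1) := by
    rw [nuF_apply]
    congr 1
    rw [← hinv]
    group
  have h2 : nuF cs y (s a, sgnc cs y⁻¹ t * 1) = (t, 1) := by
    rw [← h1, ← Equiv.Perm.mul_apply, ← map_mul, mul_inv_cancel, map_one]
    rfl
  have h3 : nuF cs y (s a, sgnc cs y⁻¹ t * 1) =
      (y * s a * y⁻¹, sgnc cs y (s a) * (sgnc cs y⁻¹ t * 1)) := nuF_apply ..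
  have h4 : sgnc cs y (s a) * (sgnc cs y⁻¹ t * 1) = 1 := by
    have := congrArg Prod.snd (h3.symm.trans h2)
    simpa using this
  -- now compute nuF t (t, 1)
  have h5 : nuF cs t (t, 1) = (t * t * t⁻¹, sgnc cs t t * 1) := nuF_apply ..
  have h6 : nuF cs t (t, 1)
      = nuF cs y (nuF cs (s a) (nuF cs (y⁻¹) (t, 1))) := by
    rw [← Equiv.Perm.mul_apply, ← Equiv.Perm.mul_apply, ← map_mul, ← map_mul, hya]
  rw [h1, nuF_simple, mu_apply, if_pos rfl] at h6
  have h7 : s a * s a * s a = s a := by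
    rw [cs.simple_mul_simple_self, one_mul]
  rw [h7] at h6
  have h8 : nuF cs y (s a, -(sgnc cs y⁻¹ t * 1))
      = (y * s a * y⁻¹, sgnc cs y (s a) * (-(sgnc cs y⁻¹ t * 1))) := nuF_apply ..
  rw [h8] at h6
  have h9 := congrArg Prod.snd (h5.symm.trans h6)
  simp only [mul_one] at h9 h4 ⊢
  rw [mul_neg, h4] at h9
  simpa using h9

theorem isRightInversion_iff_odd_count {w t : W} (ht : cs.IsReflection t)
    {ω : List B} (hω : π ω = w) :
    cs.IsRightInversion w t ↔ Odd ((ris ω).count t) := by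
  have hρ : π (rword' cs w) = w := rword'_wordProd cs w
  have htrans := count_ris_parity cs (hω.trans hρ.symm) t
  constructor
  · intro hinv
    rw [htrans]
    -- show sgnc cs w t = -1
    have hwt : w * t * t = w := by
      rw [mul_assoc, ht.mul_self, mul_one]
    have hstep : sgnc cs w t = - sgnc cs (w * t) t := by
      have e1 : nuF cs w (t, 1) = (w * t * w⁻¹, sgnc cs w t * 1) := nuF_apply ..
      have e3 : nuF cs t (t, 1) = (t, -1) := by
        rw [nuF_apply, sgnc_refl_self cs ht, mul_one]
        congr 1
        rw [ht.mul_self, one_mul, ht.inv]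
      have e2 : nuF cs w (t, 1) = nuF cs (w * t) (t, -1) := by
        rw [← e3, ← Equiv.Perm.mul_apply, ← map_mul, hwt]
      have e2' : nuF cs (w * t) (t, -1)
          = ((w * t) * t * (w * t)⁻¹, sgnc cs (w * t) t * (-1)) := nuF_apply ..
      have e4 := congrArg Prod.snd (e1.symm.trans (e2.trans e2'))
      simp only [mul_one] at e4
      rw [e4, mul_neg_one]
    have hne : sgnc cs (w * t) t = 1 := by
      rcases Int.units_eq_one_or (sgnc cs (w * t) t) with h | h
      · exact h
      · exfalso
        have hodd := sgnc_neg_odd cs h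
        have hpos : 0 < (ris (rword' cs (w * t))).count t := by
          rcases hodd with ⟨c, hc⟩
          omega
        have hmem : t ∈ ris (rword' cs (w * t)) := List.count_pos_iff.mp hpos
        have hIRI := cs.isRightInversion_of_mem_rightInvSeq (rword'_isReduced cs (w * t)) hmem
        have h5 : ℓ (π (rword' cs (w * t)) * t) < ℓ (π (rword' cs (w * t))) := hIRI.2
        rw [rword'_wordProd, hwt] at h5
        have h6 := hinv.2
        omega
    exact sgnc_neg_odd cs (by rw [hstep, hne])
  · intro hodd
    rw [htrans] at hodd
    have hpos : 0 < (ris (rword' cs w)).count t := by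
      rcases hodd with ⟨c, hc⟩
      omega
    have hmem : t ∈ ris (rword' cs w) := List.count_pos_iff.mp hpos
    have := cs.isRightInversion_of_mem_rightInvSeq (rword'_isReduced cs w) hmem
    rwa [hρ] at this


end SignedPermutation

theorem strongExchangeR {ω : List B} (hred : cs.IsReduced ω) {t : W}
    (ht : cs.IsReflection t) (hlt : ℓ (π ω * t) < ℓ (π ω)) :
    ∃ j, j < ω.length ∧ π ω * t = π (ω.eraseIdx j) := by
  classical
  have hodd : Odd ((ris ω).count t) :=
    (isRightInversion_iff_odd_count cs ht (rfl : π ω = π ω)).mp ⟨ht, hlt⟩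
  have hpos : 0 < (ris ω).count t := by
    rcases hodd with ⟨c, hc⟩; omega
  have hmem : t ∈ ris ω := List.count_pos_iff.mp hpos
  obtain ⟨j, hj, hget⟩ := List.mem_iff_getElem.mp hmem
  rw [cs.length_rightInvSeq] at hj
  refine ⟨j, hj, ?_⟩
  have hgd : (ris ω).getD j 1 = t := by
    rw [List.getD_eq_getElem _ 1 (by rw [cs.length_rightInvSeq]; exact hj)]
    exact hget
  rw [← hgd]
  exact cs.wordProd_mul_getD_rightInvSeq ω j

theorem exists_isReduced_sublist (ω : List B) :
    ∃ τ, τ.Sublist ω ∧ cs.IsReduced τ ∧ π τ = π ω := by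
  classical
  suffices h : ∀ n (ω : List B), ω.length ≤ n → ∃ τ, τ.Sublist ω ∧ cs.IsReduced τ ∧ π τ = π ω by
    exact h ω.length ω le_rfl
  intro n
  induction n with
  | zero =>
      intro ω hω
      have : ω = [] := List.eq_nil_of_length_eq_zero (by omega)
      subst this
      exact ⟨[], List.Sublist.refl _, by simp [CoxeterSystem.IsReduced], rfl⟩
  | succ n ihn =>
      intro ω hω
      by_cases hred : cs.IsReduced ω
      · exact ⟨ω, List.Sublist.refl _, hred, rfl⟩
      · have hex : ∃ k, ¬ cs.IsReduced (ω.take (k + 1)) := by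
          have hne : ω ≠ [] := by
            rintro rfl
            exact hred (by simp [CoxeterSystem.IsReduced])
          refine ⟨ω.length - 1, ?_⟩
          have : ω.length - 1 + 1 = ω.length := by
            have := List.length_pos_iff.mpr hne
            omega
          rw [this, List.take_length]
          exact hred
        let k := Nat.find hex
        have hk : ¬ cs.IsReduced (ω.take (k + 1)) := Nat.find_spec hex
        have hmin : ∀ j, j < k → cs.IsReduced (ω.take (j + 1)) := by
          intro j hj
          by_contra hc
          have h2 : k ≤ j := Nat.find_le hc
          omega
        have hkred : cs.IsReduced (ω.take k) := by
          cases hk2 : k with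
          | zero => simp [CoxeterSystem.IsReduced]
          | succ j =>
              exact hmin j (by omega)
        have hklt : k < ω.length := by
          have hne : ω ≠ [] := by
            rintro rfl
            exact hred (by simp [CoxeterSystem.IsReduced])
          have h1 : k ≤ ω.length - 1 := Nat.find_le (by
            have h2 : ω.length - 1 + 1 = ω.length := by
              have := List.length_pos_iff.mpr hne
              omega
            rw [h2, List.take_length]
            exact hred)
          have := List.length_pos_iff.mpr hne
          omega
        have htake : ω.take (k + 1) = ω.take k ++ [ω[k]] := by
          rw [← List.take_concat_get hklt]
          simp [List.concat_eq_append, List.get_eq_getElem]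
        have hlenk : (ω.take k).length = k := by
          rw [List.length_take]
          omega
        have hxred : ℓ (π (ω.take k)) = k := by
          rw [hkred, hlenk]
        have hlt : ℓ (π (ω.take k) * s (ω[k])) < ℓ (π (ω.take k)) := by
          have hne : ℓ (π (ω.take k) * s (ω[k])) ≠ k + 1 := by
            intro hc
            apply hk
            unfold CoxeterSystem.IsReduced
            rw [htake, cs.wordProd_append, cs.wordProd_singleton, hc]
            simp
            omega
          rcases cs.length_mul_simple (π (ω.take k)) (ω[k]) with h | h
          · rw [hxred] at h; omega
          · omega
        obtain ⟨j, hj, heq⟩ := strongExchangeR cs hkred (cs.isReflection_simple (ω[k])) hlt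
        set σ := (ω.take k).eraseIdx j ++ ω.drop (k + 1) with hσ
        have hπσ : π σ = π ω := by
          have h5 : π (ω.take (k + 1)) = π (ω.take k) * s (ω[k]) := by
            rw [htake, cs.wordProd_append, cs.wordProd_singleton]
          rw [hσ, cs.wordProd_append, ← heq, ← h5, ← cs.wordProd_append,
            List.take_append_drop]
        have hσsub : σ.Sublist ω := by
          have h1 : ((ω.take k).eraseIdx j).Sublist (ω.take k) := List.eraseIdx_sublist _ j
          have h2 : (ω.drop (k + 1)).Sublist (ω.drop k) := by
            have e : (ω.drop k).tail = ω.drop (k + 1) := by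
              rw [← List.drop_one, List.drop_drop]
            rw [← e]
            exact List.tail_sublist _
          have h3 := h1.append h2
          rwa [List.take_append_drop] at h3
        have hσlen : σ.length ≤ n := by
          have hjk : j < k := by
            rw [hlenk] at hj
            exact hj
          rw [hσ, List.length_append, List.length_eraseIdx, hlenk, if_pos hjk,
            List.length_drop]
          omega
        obtain ⟨τ, h1, h2, h3⟩ := ihn σ hσlen
        exact ⟨τ, h1.trans hσsub, h2, h3.trans hπσ⟩

/-- One step of the reflection order. -/
def Rlt1 (u w : W) : Prop := ∃ t, cs.IsReflection t ∧ w = u * t ∧ ℓ u < ℓ w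

/-- The reflection (Bruhat) order. -/
def Rle : W → W → Prop := Relation.ReflTransGen (Rlt1 cs)

theorem Rle.rfl {u : W} : Rle cs u u := Relation.ReflTransGen.refl

theorem Rle.trans {u v w : W} (h1 : Rle cs u v) (h2 : Rle cs v w) : Rle cs u w :=
  Relation.ReflTransGen.trans h1 h2

theorem Rle_length {u w : W} (h : Rle cs u w) : ℓ u ≤ ℓ w := by
  induction h with
  | refl => exact le_rfl
  | tail _ hstep ih =>
      obtain ⟨t, _, _, hlen⟩ := hstep
      omega

theorem Rle_of_ascent {w : W} {a : B} (h : ℓ w < ℓ (w * s a)) : Rle cs w (w * s a) :=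
  Relation.ReflTransGen.single ⟨s a, cs.isReflection_simple a, rfl, h⟩

theorem Rle_of_descent {w : W} {a : B} (h : ℓ (w * s a) < ℓ w) : Rle cs (w * s a) w :=
  Relation.ReflTransGen.single ⟨s a, cs.isReflection_simple a, by
    rw [mul_assoc, cs.simple_mul_simple_self, mul_one], h⟩

theorem Rle_subword {u w : W} (h : Rle cs u w) :
    ∀ ω : List B, cs.IsReduced ω → π ω = w →
      ∃ τ, τ.Sublist ω ∧ cs.IsReduced τ ∧ π τ = u := by
  induction h with
  | refl => exact fun ω h1 h2 => ⟨ω, List.Sublist.refl _, h1, h2⟩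
  | @tail y z huy hyz ih =>
      intro ω hred hπ
      obtain ⟨t, ht, hz, hlen⟩ := hyz
      have hzt : z * t = y := by
        rw [hz, mul_assoc, ht.mul_self, mul_one]
      have hlt : ℓ (π ω * t) < ℓ (π ω) := by
        rw [hπ, hzt]
        omega
      obtain ⟨j, hj, heq⟩ := strongExchangeR cs hred ht hlt
      obtain ⟨κ, hκ1, hκ2, hκ3⟩ := exists_isReduced_sublist cs (ω.eraseIdx j)
      have hκy : π κ = y := by
        rw [hκ3, ← heq, hπ, hzt]
      obtain ⟨τ, h1, h2, h3⟩ := ih κ hκ2 hκy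
      exact ⟨τ, h1.trans (hκ1.trans (List.eraseIdx_sublist _ j)), h2, h3⟩


/-- The combined core statement: the Deodhar lifting property and the subword property. -/
theorem coreLD : ∀ N : ℕ,
    (∀ Z u : W, ∀ a : B, ℓ Z ≤ N → Rle cs u Z → ℓ (Z * s a) < ℓ Z → ℓ u < ℓ (u * s a) →
      Rle cs (u * s a) Z ∧ Rle cs u (Z * s a)) ∧
    (∀ ω τ : List B, cs.IsReduced ω → ℓ (π ω) ≤ N → τ.Sublist ω → cs.IsReduced τ →
      Rle cs (π τ) (π ω)) := by
  intro N
  induction N using Nat.strong_induction_on with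
  | _ N IH =>
  -- Lstep: ascent-ascent monotonicity
  have Lstep : ∀ u Wt : W, ∀ a : B, ℓ (Wt * s a) ≤ N → ℓ Wt < ℓ (Wt * s a) →
      ℓ u < ℓ (u * s a) → Rle cs u Wt → Rle cs (u * s a) (Wt * s a) := by
    intro u Wt a h1 h2 h3 hle
    revert h1 h2
    induction hle with
    | refl => intro _ _; exact Rle.rfl cs
    | @tail y W' hRy hstep ih =>
        intro h1 h2
        obtain ⟨t, ht, hW', hlty⟩ := hstep
        rcases Nat.lt_or_ge (ℓ (y * s a)) (ℓ y) with hya | hya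
        · -- descent at y : use LD from strong induction at level ℓ y
          have hyN : ℓ y < N := by omega
          have hLD := (IH (ℓ y) hyN).1 y u a le_rfl hRy hya h3
          have c1 : Rle cs (u * s a) y := hLD.1
          have c2 : Rle cs y W' := Relation.ReflTransGen.single ⟨t, ht, hW', hlty⟩
          have c3 : Rle cs W' (W' * s a) := Rle_of_ascent cs h2
          exact Rle.trans cs (Rle.trans cs c1 c2) c3
        · -- ascent at y
          have hya' : ℓ (y * s a) = ℓ y + 1 := by
            rcases cs.length_mul_simple y a with h | h <;> omega
          have hstep2 : Rlt1 cs (y * s a) (W' * s a) := by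
            refine ⟨s a * t * s a, ?_, ?_, ?_⟩
            · have := ht.conj (s a)
              rwa [cs.inv_simple] at this
            · rw [hW']
              calc y * t * s a = y * (s a * s a) * t * s a := by
                    rw [cs.simple_mul_simple_self, mul_one]
                _ = y * s a * (s a * t * s a) := by group
            · omega
          have ihy := ih (by omega) (by omega)
          exact ihy.tail hstep2
  -- main LD statement at level N
  have hLDN : ∀ Z u : W, ∀ a : B, ℓ Z ≤ N → Rle cs u Z → ℓ (Z * s a) < ℓ Z →
      ℓ u < ℓ (u * s a) → Rle cs (u * s a) Z ∧ Rle cs u (Z * s a) := by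
    intro Z u a hZN hle
    revert hZN
    induction hle with
    | refl => intro _ hdesc hasc; omega
    | @tail y Z' hRy hstep ih =>
        intro hZN hdesc hasc
        obtain ⟨t, ht, hZ', hlty⟩ := hstep
        have hZlen : ℓ (Z' * s a) + 1 = ℓ Z' := by
          rcases cs.length_mul_simple Z' a with h | h <;> omega
        set ρ' := rword' cs (Z' * s a) with hρ'
        have hρ'red : cs.IsReduced ρ' := rword'_isReduced cs _
        have hρ'prod : π ρ' = Z' * s a := rword'_wordProd cs _
        have hρ'len : ρ'.length = ℓ (Z' * s a) := by
          rw [← hρ'red, hρ'prod]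
        have hπω : π (ρ' ++ [a]) = Z' := by
          rw [cs.wordProd_append, cs.wordProd_singleton, hρ'prod,
            cs.simple_mul_simple_cancel_right]
        have hωred : cs.IsReduced (ρ' ++ [a]) := by
          unfold CoxeterSystem.IsReduced
          rw [hπω, List.length_append, List.length_singleton, hρ'len]
          omega
        have hZt : Z' * t = y := by
          rw [hZ', mul_assoc, ht.mul_self, mul_one]
        have hlt : ℓ (π (ρ' ++ [a]) * t) < ℓ (π (ρ' ++ [a])) := by
          rw [hπω, hZt]
          omega
        obtain ⟨j, hj, heq⟩ := strongExchangeR cs hωred ht hlt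
        rw [hπω, hZt] at heq
        by_cases hjlast : j = ρ'.length
        · -- y = Z' * s a
          have hy : y = Z' * s a := by
            rw [heq, hjlast]
            rw [List.eraseIdx_append_of_length_le (le_refl ρ'.length)]
            simp [hρ'prod]
          have G2 : Rle cs u (Z' * s a) := hy ▸ hRy
          have G1 : Rle cs (u * s a) Z' := by
            have hasc' : ℓ (Z' * s a) < ℓ (Z' * s a * s a) := by
              rw [cs.simple_mul_simple_cancel_right]
              omega
            have := Lstep u (Z' * s a) a (by rw [cs.simple_mul_simple_cancel_right]; omega)
              hasc' hasc G2
            rwa [cs.simple_mul_simple_cancel_right] at this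
          exact ⟨G1, G2⟩
        · have hjlt : j < ρ'.length := by
            rw [List.length_append, List.length_singleton] at hj
            omega
          have hys_eq : y * s a = π (ρ'.eraseIdx j) := by
            have e1 : (ρ' ++ [a]).eraseIdx j = ρ'.eraseIdx j ++ [a] :=
              List.eraseIdx_append_of_lt_length hjlt [a]
            rw [heq, e1, cs.wordProd_append, cs.wordProd_singleton,
              cs.simple_mul_simple_cancel_right]
          obtain ⟨κ, hκ1, hκ2, hκ3⟩ := exists_isReduced_sublist cs (ρ'.eraseIdx j)
          have hNpos : 1 ≤ N := by omega
          have hysZs : Rle cs (y * s a) (Z' * s a) := by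
            have hA := (IH (N - 1) (by omega)).2 ρ' κ hρ'red
              (by rw [hρ'prod]; omega) (hκ1.trans (List.eraseIdx_sublist _ j)) hκ2
            rw [hκ3, ← hys_eq, hρ'prod] at hA
            exact hA
          rcases Nat.lt_or_ge (ℓ (y * s a)) (ℓ y) with hya | hya
          · -- descent at y
            have hLDy := (IH (ℓ y) (by omega)).1 y u a le_rfl hRy hya hasc
            have G1 : Rle cs (u * s a) Z' :=
              (hLDy.1).tail ⟨t, ht, hZ', hlty⟩
            have G2 : Rle cs u (Z' * s a) := Rle.trans cs hLDy.2 hysZs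
            exact ⟨G1, G2⟩
          · -- ascent at y
            have hya' : ℓ y < ℓ (y * s a) := by
              rcases cs.length_mul_simple y a with h | h <;> omega
            have G2 : Rle cs u (Z' * s a) :=
              Rle.trans cs (Rle.trans cs hRy (Rle_of_ascent cs (by omega))) hysZs
            have G1 : Rle cs (u * s a) Z' := by
              have hZ'aa : Z' * s a * s a = Z' := cs.simple_mul_simple_cancel_right a
              have := Lstep u (Z' * s a) a (by rw [hZ'aa]; omega)
                (by rw [hZ'aa]; omega) hasc G2
              rwa [hZ'aa] at this
            exact ⟨G1, G2⟩
  refine ⟨hLDN, ?_⟩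
  -- subword property at level N
  intro ω τ hred hlen hsub hτred
  rcases Nat.lt_or_ge (ℓ (π ω)) N with hlt | hge
  · rcases Nat.eq_zero_or_pos N with rfl | hN
    · omega
    · exact (IH (N - 1) (by omega)).2 ω τ hred (by omega) hsub hτred
  · have hN : ℓ (π ω) = N := by omega
    rcases List.eq_nil_or_concat ω with rfl | ⟨ω', a, rfl⟩
    · have : τ = [] := List.sublist_nil.mp hsub
      subst this
      exact Rle.rfl cs
    · rw [List.concat_eq_append] at *
      have hω'red : cs.IsReduced ω' := by
        have h1 : (ω' ++ [a]).take ω'.length = ω' := by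
          rw [List.take_left]
        rw [← h1]
        exact hred.take _
      have hω'len : ℓ (π ω') = ω'.length := hω'red
      have hπ : π (ω' ++ [a]) = π ω' * s a := by
        rw [cs.wordProd_append, cs.wordProd_singleton]
      have hlen2 : ℓ (π (ω' ++ [a])) = ω'.length + 1 := by
        rw [hred]
        rw [List.length_append, List.length_singleton]
      obtain ⟨τ₁, τ₂, rfl, hsub1, hsub2⟩ := List.sublist_append_iff.mp hsub
      have hτ₂ : τ₂ = [] ∨ τ₂ = [a] := by
        rcases List.sublist_singleton.mp hsub2 with h | h
        · exact Or.inl h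
        · exact Or.inr h
      rcases hτ₂ with rfl | rfl
      · -- τ uses only ω'
        rw [List.append_nil] at *
        have h1 := (IH (N - 1) (by omega)).2 ω' τ₁ hω'red (by omega) hsub1 hτred
        have h2 : Rle cs (π ω') (π (ω' ++ [a])) := by
          rw [hπ]
          apply Rle_of_ascent
          rw [← hπ]
          omega
        exact Rle.trans cs h1 h2
      · -- τ ends with the letter a
        have hτ₁red : cs.IsReduced τ₁ := by
          have h1 : (τ₁ ++ [a]).take τ₁.length = τ₁ := by
            rw [List.take_left]
          rw [← h1]
          exact hτred.take _
        have hτπ : π (τ₁ ++ [a]) = π τ₁ * s a := by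
          rw [cs.wordProd_append, cs.wordProd_singleton]
        have hτasc : ℓ (π τ₁) < ℓ (π τ₁ * s a) := by
          rw [← hτπ, hτred, hτ₁red]
          rw [List.length_append, List.length_singleton]
          omega
        have h1 := (IH (N - 1) (by omega)).2 ω' τ₁ hω'red (by omega) hsub1 hτ₁red
        have h2 : Rle cs (π τ₁) (π (ω' ++ [a])) := by
          refine Rle.trans cs h1 ?_
          rw [hπ]
          apply Rle_of_ascent
          rw [← hπ]
          omega
        have h3 := hLDN (π (ω' ++ [a])) (π τ₁) a (by omega) h2
          (by rw [hπ, cs.simple_mul_simple_cancel_right]; rw [hπ] at hlen2; omega) hτasc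
        rw [hτπ]
        exact h3.1


theorem bruhatLE_iff_Rle {u w : W} : BruhatLE cs u w ↔ Rle cs u w := by
  constructor
  · rintro ⟨ω, hred, hπ, τ, hsub, hτred, hτπ⟩
    have := (coreLD cs (ℓ (π ω))).2 ω τ hred le_rfl hsub hτred
    rwa [hπ, hτπ] at this
  · intro h
    obtain ⟨τ, hsub, hτred, hτπ⟩ :=
      Rle_subword cs h (rword' cs w) (rword'_isReduced cs w) (rword'_wordProd cs w)
    exact ⟨rword' cs w, rword'_isReduced cs w, rword'_wordProd cs w, τ, hsub, hτred, hτπ⟩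

theorem BruhatLE.refl (w : W) : BruhatLE cs w w :=
  ⟨rword' cs w, rword'_isReduced cs w, rword'_wordProd cs w,
    rword' cs w, List.Sublist.refl _, rword'_isReduced cs w, rword'_wordProd cs w⟩

theorem BruhatLE.le_trans {u v w : W} (h1 : BruhatLE cs u v) (h2 : BruhatLE cs v w) :
    BruhatLE cs u w := by
  rw [bruhatLE_iff_Rle] at *
  exact Rle.trans cs h1 h2

theorem BruhatLE.length_le {u w : W} (h : BruhatLE cs u w) : ℓ u ≤ ℓ w := by
  obtain ⟨ω, hred, hπ, τ, hsub, hτred, hτπ⟩ := h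
  calc ℓ u = τ.length := by rw [← hτπ, hτred]
    _ ≤ ω.length := hsub.length_le
    _ = ℓ w := by rw [← hπ, hred]

theorem BruhatLE.eq_of_length {u w : W} (h : BruhatLE cs u w) (hl : ℓ w ≤ ℓ u) : u = w := by
  obtain ⟨ω, hred, hπ, τ, hsub, hτred, hτπ⟩ := h
  have h1 : ℓ u = τ.length := by rw [← hτπ, hτred]
  have h2 : ℓ w = ω.length := by rw [← hπ, hred]
  have h3 := hsub.length_le
  have := hsub.eq_of_length (by omega)
  rw [← hτπ, ← hπ, this]

/-- Lifting: `u ≤ w`, `ws_a < w`, `u < us_a` imply `u ≤ ws_a`. -/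
theorem liftDesc1 {u w : W} {a : B} (h : BruhatLE cs u w) (hw : ℓ (w * s a) < ℓ w)
    (hu : ℓ u < ℓ (u * s a)) : BruhatLE cs u (w * s a) := by
  rw [bruhatLE_iff_Rle] at *
  exact ((coreLD cs (ℓ w)).1 w u a le_rfl h hw hu).2

/-- Lifting: `u ≤ w`, `ws_a < w` imply `us_a ≤ w`. -/
theorem liftDesc2 {u w : W} {a : B} (h : BruhatLE cs u w) (hw : ℓ (w * s a) < ℓ w) :
    BruhatLE cs (u * s a) w := by
  rw [bruhatLE_iff_Rle] at *
  rcases Nat.lt_or_ge (ℓ (u * s a)) (ℓ u) with hu | hu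
  · exact Rle.trans cs (Rle_of_descent cs hu) h
  · have hu' : ℓ u < ℓ (u * s a) := by
      rcases cs.length_mul_simple u a with h' | h' <;> omega
    exact ((coreLD cs (ℓ w)).1 w u a le_rfl h hw hu').1

/-- Lifting: both descents. -/
theorem liftBoth {u w : W} {a : B} (h : BruhatLE cs u w) (hu : ℓ (u * s a) < ℓ u)
    (hw : ℓ (w * s a) < ℓ w) : BruhatLE cs (u * s a) (w * s a) := by
  have h1 : BruhatLE cs (u * s a) w := liftDesc2 cs h hw
  have h2 : ℓ (u * s a) < ℓ (u * s a * s a) := by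
    rw [cs.simple_mul_simple_cancel_right]
    omega
  exact liftDesc1 cs h1 hw h2

/-- Lifting: both ascents. -/
theorem liftAsc {u w : W} {a : B} (h : BruhatLE cs u w) (hu : ℓ u < ℓ (u * s a))
    (hw : ℓ w < ℓ (w * s a)) : BruhatLE cs (u * s a) (w * s a) := by
  rw [bruhatLE_iff_Rle] at *
  have h1 : Rle cs u (w * s a) := Rle.trans cs h (Rle_of_ascent cs hw)
  have h2 : ℓ (w * s a * s a) < ℓ (w * s a) := by
    rw [cs.simple_mul_simple_cancel_right]
    omega
  exact ((coreLD cs (ℓ (w * s a))).1 (w * s a) u a le_rfl h1 h2 hu).1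

theorem le_of_descent {w : W} {a : B} (h : ℓ (w * s a) < ℓ w) : BruhatLE cs (w * s a) w := by
  rw [bruhatLE_iff_Rle]
  exact Rle_of_descent cs h

theorem le_of_ascent {w : W} {a : B} (h : ℓ w < ℓ (w * s a)) : BruhatLE cs w (w * s a) := by
  rw [bruhatLE_iff_Rle]
  exact Rle_of_ascent cs h

theorem BruhatLE.inv {u w : W} (h : BruhatLE cs u w) : BruhatLE cs u⁻¹ w⁻¹ := by
  obtain ⟨ω, hred, hπ, τ, hsub, hτred, hτπ⟩ := h
  refine ⟨ω.reverse, hred.reverse, by rw [cs.wordProd_reverse, hπ],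
    τ.reverse, hsub.reverse, hτred.reverse, by rw [cs.wordProd_reverse, hτπ]⟩

theorem le_of_descentL {w : W} {a : B} (h : ℓ (s a * w) < ℓ w) : BruhatLE cs (s a * w) w := by
  have h1 : ℓ (w⁻¹ * s a) < ℓ w⁻¹ := by
    have e : w⁻¹ * s a = (s a * w)⁻¹ := by rw [mul_inv_rev, cs.inv_simple]
    rw [e, cs.length_inv, cs.length_inv]
    exact h
  have := (le_of_descent cs h1).inv cs
  rwa [mul_inv_rev, cs.inv_simple, inv_inv] at this

theorem liftBothL {u w : W} {a : B} (h : BruhatLE cs u w) (hu : ℓ (s a * u) < ℓ u)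
    (hw : ℓ (s a * w) < ℓ w) : BruhatLE cs (s a * u) (s a * w) := by
  have e1 : ∀ v : W, v⁻¹ * s a = (s a * v)⁻¹ := by
    intro v; rw [mul_inv_rev, cs.inv_simple]
  have h1 : ℓ (u⁻¹ * s a) < ℓ u⁻¹ := by
    rw [e1, cs.length_inv, cs.length_inv]; exact hu
  have h2 : ℓ (w⁻¹ * s a) < ℓ w⁻¹ := by
    rw [e1, cs.length_inv, cs.length_inv]; exact hw
  have := (liftBoth cs (h.inv cs) h1 h2).inv cs
  rwa [e1, e1, inv_inv, inv_inv] at this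

theorem liftDesc1L {u w : W} {a : B} (h : BruhatLE cs u w) (hw : ℓ (s a * w) < ℓ w)
    (hu : ℓ u < ℓ (s a * u)) : BruhatLE cs u (s a * w) := by
  have e1 : ∀ v : W, v⁻¹ * s a = (s a * v)⁻¹ := by
    intro v; rw [mul_inv_rev, cs.inv_simple]
  have h1 : ℓ (w⁻¹ * s a) < ℓ w⁻¹ := by
    rw [e1, cs.length_inv, cs.length_inv]; exact hw
  have h2 : ℓ u⁻¹ < ℓ (u⁻¹ * s a) := by
    rw [e1, cs.length_inv, cs.length_inv]; exact hu
  have := (liftDesc1 cs (h.inv cs) h1 h2).inv cs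
  rwa [e1, inv_inv, inv_inv] at this

/-- Monotonicity of right multiplication along a full-length word. -/
theorem le_mul_word {y Y : W} (h : BruhatLE cs y Y) (c : List B)
    (hfull : ℓ (Y * π c) = ℓ Y + c.length) : BruhatLE cs (y * π c) (Y * π c) := by
  have hΩred : cs.IsReduced (rword' cs Y ++ c) := by
    unfold CoxeterSystem.IsReduced
    rw [cs.wordProd_append, rword'_wordProd, hfull, List.length_append]
    congr 1
    have := rword'_isReduced cs Y
    rw [← this, rword'_wordProd]
  have hΩπ : π (rword' cs Y ++ c) = Y * π c := by
    rw [cs.wordProd_append, rword'_wordProd]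
  obtain ⟨τ, hsub, hτred, hτπ⟩ := Rle_subword cs ((bruhatLE_iff_Rle cs).mp h)
    (rword' cs Y) (rword'_isReduced cs Y) (rword'_wordProd cs Y)
  obtain ⟨κ, hκ1, hκ2, hκ3⟩ := exists_isReduced_sublist cs (τ ++ c)
  refine ⟨rword' cs Y ++ c, hΩred, hΩπ, κ, ?_, hκ2, ?_⟩
  · exact hκ1.trans (hsub.append (List.Sublist.refl c))
  · rw [hκ3, cs.wordProd_append, hτπ]

/-- Prefix staircase. -/
theorem length_mul_take {Y : W} {c : List B}
    (hfull : ℓ (Y * π c) = ℓ Y + c.length) (r : ℕ) (hr : r ≤ c.length) :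
    ℓ (Y * π (c.take r)) = ℓ Y + r := by
  have hΩred : cs.IsReduced (rword' cs Y ++ c) := by
    unfold CoxeterSystem.IsReduced
    rw [cs.wordProd_append, rword'_wordProd, hfull, List.length_append]
    congr 1
    have := rword'_isReduced cs Y
    rw [← this, rword'_wordProd]
  have htake := hΩred.take ((rword' cs Y).length + r)
  rw [List.take_length_add_append] at htake
  have hρlen : (rword' cs Y).length = ℓ Y := by
    have := rword'_isReduced cs Y
    rw [← this, rword'_wordProd]
  unfold CoxeterSystem.IsReduced at htake
  rw [cs.wordProd_append, rword'_wordProd, List.length_append, List.length_take] at htake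
  rw [htake, hρlen]
  congr 1
  omega

/-- Strict Bruhat comparison for an ascent. -/
theorem lt_mul_simple {g : W} {i : B} (h : ℓ (g * s i) = ℓ g + 1) :
    BruhatLT cs g (g * s i) := by
  constructor
  · refine ⟨rword' cs g ++ [i], ?_, ?_, rword' cs g, List.sublist_append_left _ _,
      rword'_isReduced cs g, rword'_wordProd cs g⟩
    · unfold CoxeterSystem.IsReduced
      rw [cs.wordProd_append, cs.wordProd_singleton, rword'_wordProd, h,
        List.length_append, List.length_singleton]
      congr 1
      have := rword'_isReduced cs g
      rw [← this, rword'_wordProd]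
    · rw [cs.wordProd_append, cs.wordProd_singleton, rword'_wordProd]
  · intro he
    rw [← he] at h
    omega

/-- Length criterion for products with a reflection between. -/
theorem length_full_lemma {A Bb t : W} (hfull : ℓ (A * Bb) = ℓ A + ℓ Bb)
    (ht : cs.IsReflection t) (htB : ℓ (t * Bb) < ℓ Bb) : ℓ A < ℓ (A * t) := by
  have hne := ht.length_mul_left_ne A
  rcases Nat.lt_or_ge (ℓ A) (ℓ (A * t)) with h | h
  · exact h
  · exfalso
    have h2 : A * Bb = (A * t) * (t * Bb) := by
      calc A * Bb = A * (t * t) * Bb := by rw [ht.mul_self, mul_one]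
        _ = (A * t) * (t * Bb) := by group
    have h3 : ℓ (A * Bb) ≤ ℓ (A * t) + ℓ (t * Bb) := by
      rw [h2]
      exact cs.length_mul_le _ _
    omega

/-- The key length lemma: `ℓ(xv)=ℓx+ℓv`, `ℓ(xs)=ℓx+1`, `ℓ(sv)=ℓv+1` imply
`ℓ(xsv)=ℓx+ℓv+1`. -/
theorem length_sandwich {x v : W} {b : B} (hxv : ℓ (x * v) = ℓ x + ℓ v)
    (hxs : ℓ (x * s b) = ℓ x + 1) (hsv : ℓ (s b * v) = ℓ v + 1) :
    ℓ (x * s b * v) = ℓ x + ℓ v + 1 := by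
  classical
  set t := v⁻¹ * s b * v with hT
  have ht : cs.IsReflection t := ⟨v⁻¹, b, by rw [hT, inv_inv]⟩
  have hxsv : x * s b * v = (x * v) * t := by
    rw [hT]
    group
  -- count t in ris (rword' x ++ rword' v) is even
  have hword : π (rword' cs x ++ rword' cs v) = x * v := by
    rw [cs.wordProd_append, rword'_wordProd, rword'_wordProd]
  have hcount : ¬ Odd ((ris (rword' cs x ++ rword' cs v)).count t) := by
    rw [ris_append]
    rw [List.count_append]
    have hmapcount : ((ris (rword' cs x)).map
        (fun r => (π (rword' cs v))⁻¹ * r * π (rword' cs v))).count t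
        = (ris (rword' cs x)).count (s b) := by
      rw [rword'_wordProd]
      have hinj : Function.Injective (fun r : W => v⁻¹ * r * v) := by
        intro r1 r2 h12
        simpa using mul_left_cancel (mul_right_cancel h12)
      have : t = (fun r : W => v⁻¹ * r * v) (s b) := by rw [hT]
      rw [this, List.count_map_of_injective _ _ hinj]
    rw [hmapcount]
    have hc1 : ¬ Odd ((ris (rword' cs x)).count (s b)) := by
      intro hodd
      have := (isRightInversion_iff_odd_count cs (cs.isReflection_simple b)
        (rword'_wordProd cs x)).mpr hodd
      have := this.2
      omega
    have hc2 : ¬ Odd ((ris (rword' cs v)).count t) := by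
      intro hodd
      have h5 := ((isRightInversion_iff_odd_count cs ht (rword'_wordProd cs v)).mpr hodd).2
      rw [hT] at h5
      have e : v * (v⁻¹ * s b * v) = s b * v := by group
      rw [e] at h5
      omega
    rcases Nat.even_or_odd ((ris (rword' cs x)).count (s b)) with he1 | ho1
    · rcases Nat.even_or_odd ((ris (rword' cs v)).count t) with he2 | ho2
      · intro hodd
        rcases he1 with ⟨c1, e1⟩
        rcases he2 with ⟨c2, e2⟩
        rcases hodd with ⟨c3, e3⟩
        omega
      · exact absurd ho2 hc2
    · exact absurd ho1 hc1
  have hnotinv : ¬ ℓ ((x * v) * t) < ℓ (x * v) := by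
    intro hlt
    exact hcount ((isRightInversion_iff_odd_count cs ht hword).mp ⟨ht, hlt⟩)
  have hne := ht.length_mul_left_ne (x * v)
  have hge : ℓ (x * v) + 1 ≤ ℓ ((x * v) * t) := by omega
  have hle : ℓ (x * s b * v) ≤ ℓ (x * s b) + ℓ v := cs.length_mul_le _ _
  rw [← hxsv] at hge
  omega


theorem downLWord_nil (u : W) : downLWord cs [] u = u := rfl

theorem downLWord_cons (i : B) (σ : List B) (u : W) :
    downLWord cs (i :: σ) u =
      if ℓ (s i * downLWord cs σ u) < ℓ (downLWord cs σ u)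
      then s i * downLWord cs σ u else downLWord cs σ u := rfl

/-- Folding commutes with right multiplication by a common right descent. -/
theorem downLWord_mul_simple (σ : List B) (u : W) (e : B)
    (h : ℓ (downLWord cs σ u * s e) < ℓ (downLWord cs σ u)) :
    downLWord cs σ (u * s e) = downLWord cs σ u * s e := by
  induction σ with
  | nil => rfl
  | cons i σ ih =>
      rw [downLWord_cons] at h
      have hassoc : s i * downLWord cs σ u * s e = s i * (downLWord cs σ u * s e) := by
        rw [mul_assoc]
      have hd1 : ℓ (s i * downLWord cs σ u) + 1 = ℓ (downLWord cs σ u) ∨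
          ℓ (s i * downLWord cs σ u) = ℓ (downLWord cs σ u) + 1 := by
        rcases cs.length_simple_mul (downLWord cs σ u) i with h' | h'
        · right; exact h'
        · left; omega
      have hd2 : ℓ (downLWord cs σ u * s e) + 1 = ℓ (downLWord cs σ u) ∨
          ℓ (downLWord cs σ u * s e) = ℓ (downLWord cs σ u) + 1 := by
        rcases cs.length_mul_simple (downLWord cs σ u) e with h' | h'
        · right; exact h'
        · left; omega
      have hd3 : ℓ (s i * downLWord cs σ u * s e) + 1 = ℓ (s i * downLWord cs σ u) ∨
          ℓ (s i * downLWord cs σ u * s e) = ℓ (s i * downLWord cs σ u) + 1 := by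
        rcases cs.length_mul_simple (s i * downLWord cs σ u) e with h' | h'
        · right; exact h'
        · left; omega
      have hd4 : ℓ (s i * (downLWord cs σ u * s e)) = ℓ (s i * downLWord cs σ u * s e) := by
        rw [hassoc]
      by_cases hi : ℓ (s i * downLWord cs σ u) < ℓ (downLWord cs σ u)
      · rw [if_pos hi] at h
        have h' : ℓ (downLWord cs σ u * s e) < ℓ (downLWord cs σ u) := by
          rcases cs.length_simple_mul (downLWord cs σ u * s e) i with h5 | h5 <;> omega
        have hIH := ih h'
        rw [downLWord_cons, downLWord_cons, hIH]
        rw [if_pos hi, if_pos (by omega : ℓ (s i * (downLWord cs σ u * s e)) <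
          ℓ (downLWord cs σ u * s e))]
        rw [mul_assoc]
      · rw [if_neg hi] at h
        have hIH := ih h
        rw [downLWord_cons, downLWord_cons, hIH]
        rw [if_neg hi, if_neg (by omega : ¬ ℓ (s i * (downLWord cs σ u * s e)) <
          ℓ (downLWord cs σ u * s e))]

/-- The main structure lemma for folds: (a) `ℓ(xv) = ℓx + ℓv`; (b) `ℓ(uv⁻¹) + ℓv = ℓu`;
(c) `u ≤ xv`. Here `x = (π σ)⁻¹` and `v = U_σ ↓ u`. -/
theorem downLWord_main : ∀ σ : List B, cs.IsReduced σ → ∀ u : W,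
    ℓ ((π σ)⁻¹ * downLWord cs σ u) = σ.length + ℓ (downLWord cs σ u) ∧
    ℓ (u * (downLWord cs σ u)⁻¹) + ℓ (downLWord cs σ u) = ℓ u ∧
    BruhatLE cs u ((π σ)⁻¹ * downLWord cs σ u) := by
  intro σ
  induction σ with
  | nil =>
      intro _ u
      simp only [downLWord_nil, cs.wordProd_nil, inv_one, one_mul, List.length_nil,
        mul_inv_cancel, cs.length_one]
      exact ⟨by omega, by omega, BruhatLE.refl cs u⟩
  | cons b σ' ih =>
      intro hred u
      have hred' : cs.IsReduced σ' := by
        have h1 : (b :: σ').drop 1 = σ' := rfl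
        rw [← h1]
        exact hred.drop _
      obtain ⟨a₁, b₁, u₁⟩ := ih hred' u
      rw [downLWord_cons]
      generalize hv₁ : downLWord cs σ' u = v₁ at a₁ b₁ u₁ ⊢
      have hπcons : (π (b :: σ'))⁻¹ = (π σ')⁻¹ * s b := by
        rw [cs.wordProd_cons, mul_inv_rev, cs.inv_simple]
      have hx₁len : ℓ ((π σ')⁻¹) = σ'.length := by
        rw [cs.length_inv]
        exact hred'
      have hxlen : ℓ ((π σ')⁻¹ * s b) = σ'.length + 1 := by
        rw [← hπcons, cs.length_inv, hred]
        rfl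
      rw [hπcons, List.length_cons]
      by_cases hb : ℓ (s b * v₁) < ℓ v₁
      · -- case B: v = s b * v₁
        have hbl : ℓ (s b * v₁) + 1 = ℓ v₁ := by
          rcases cs.length_simple_mul v₁ b with h' | h' <;> omega
        rw [if_pos hb]
        refine ⟨?_, ?_, ?_⟩
        · have e1 : (π σ')⁻¹ * s b * (s b * v₁) = (π σ')⁻¹ * v₁ := by
            rw [mul_assoc, cs.simple_mul_simple_cancel_left]
          rw [e1, a₁]
          omega
        · have e2 : u * (s b * v₁)⁻¹ = (u * v₁⁻¹) * s b := by
            rw [mul_inv_rev, cs.inv_simple, mul_assoc]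
          rw [e2]
          have hfull : ℓ ((u * v₁⁻¹) * v₁) = ℓ (u * v₁⁻¹) + ℓ v₁ := by
            rw [inv_mul_cancel_right]
            omega
          have h6 := length_full_lemma cs hfull (cs.isReflection_simple b) hb
          have hd : ℓ (u * v₁⁻¹ * s b) = ℓ (u * v₁⁻¹) + 1 := by
            rcases cs.length_mul_simple (u * v₁⁻¹) b with h' | h' <;> omega
          omega
        · have e1 : (π σ')⁻¹ * s b * (s b * v₁) = (π σ')⁻¹ * v₁ := by
            rw [mul_assoc, cs.simple_mul_simple_cancel_left]
          rw [e1]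
          exact u₁
      · -- case A: v = v₁
        have hbl : ℓ (s b * v₁) = ℓ v₁ + 1 := by
          rcases cs.length_simple_mul v₁ b with h' | h' <;> omega
        rw [if_neg hb]
        have hxsfull : ℓ ((π σ')⁻¹ * s b) = ℓ ((π σ')⁻¹) + 1 := by omega
        have hxvfull : ℓ ((π σ')⁻¹ * v₁) = ℓ ((π σ')⁻¹) + ℓ v₁ := by omega
        have hA := length_sandwich cs hxvfull hxsfull hbl
        refine ⟨by omega, by omega, ?_⟩
        -- u ≤ x₁ v₁ ≤ x₁ s b v₁
        have hle2 : BruhatLE cs ((π σ')⁻¹ * v₁) ((π σ')⁻¹ * s b * v₁) := by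
          refine ⟨σ'.reverse ++ (b :: rword' cs v₁), ?_, ?_,
            σ'.reverse ++ rword' cs v₁, ?_, ?_, ?_⟩
          · unfold CoxeterSystem.IsReduced
            rw [cs.wordProd_append, cs.wordProd_reverse, cs.wordProd_cons, rword'_wordProd,
              List.length_append, List.length_reverse, List.length_cons]
            have hρ : (rword' cs v₁).length = ℓ v₁ := by
              have h7 := rword'_isReduced cs v₁
              rw [← h7, rword'_wordProd]
            rw [hρ]
            have e3 : (π σ')⁻¹ * (s b * v₁) = (π σ')⁻¹ * s b * v₁ := by
              rw [mul_assoc]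
            rw [e3, hA]
            omega
          · rw [cs.wordProd_append, cs.wordProd_reverse, cs.wordProd_cons, rword'_wordProd,
              mul_assoc]
          · exact (List.Sublist.refl _).append (List.sublist_cons_self b _)
          · unfold CoxeterSystem.IsReduced
            rw [cs.wordProd_append, cs.wordProd_reverse, rword'_wordProd,
              List.length_append, List.length_reverse]
            have hρ : (rword' cs v₁).length = ℓ v₁ := by
              have h7 := rword'_isReduced cs v₁
              rw [← h7, rword'_wordProd]
            rw [hρ, hxvfull]
            omega
          · rw [cs.wordProd_append, cs.wordProd_reverse, rword'_wordProd]
        exact BruhatLE.le_trans cs u₁ hle2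

/-- Minimality of the fold: if `u ≤ (π σ)⁻¹ h` then `U_σ ↓ u ≤ h`. -/
theorem downLWord_min : ∀ σ : List B, ∀ u h : W,
    BruhatLE cs u ((π σ)⁻¹ * h) → BruhatLE cs (downLWord cs σ u) h := by
  intro σ
  induction σ with
  | nil =>
      intro u h hle
      rw [downLWord_nil]
      rwa [cs.wordProd_nil, inv_one, one_mul] at hle
  | cons b σ' ih =>
      intro u h hle
      have hπcons : (π (b :: σ'))⁻¹ * h = (π σ')⁻¹ * (s b * h) := by
        rw [cs.wordProd_cons, mul_inv_rev, cs.inv_simple, mul_assoc]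
      rw [hπcons] at hle
      have hIH := ih u (s b * h) hle
      set v₁ := downLWord cs σ' u with hv₁
      by_cases hh : ℓ (s b * h) < ℓ h
      · -- s b * h < h
        have h2 : BruhatLE cs (s b * h) h := le_of_descentL cs hh
        rw [downLWord_cons, ← hv₁]
        by_cases hb : ℓ (s b * v₁) < ℓ v₁
        · rw [if_pos hb]
          exact BruhatLE.le_trans cs (BruhatLE.le_trans cs (le_of_descentL cs hb) hIH) h2
        · rw [if_neg hb]
          exact BruhatLE.le_trans cs hIH h2
      · have hh' : ℓ (s b * h) = ℓ h + 1 := by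
          rcases cs.length_simple_mul h b with h' | h' <;> omega
        have hdesc : ℓ (s b * (s b * h)) < ℓ (s b * h) := by
          rw [cs.simple_mul_simple_cancel_left]
          omega
        rw [downLWord_cons, ← hv₁]
        by_cases hb : ℓ (s b * v₁) < ℓ v₁
        · rw [if_pos hb]
          have := liftBothL cs hIH hb hdesc
          rwa [cs.simple_mul_simple_cancel_left] at this
        · rw [if_neg hb]
          have hb' : ℓ v₁ < ℓ (s b * v₁) := by
            rcases cs.length_simple_mul v₁ b with h' | h' <;> omega
          have := liftDesc1L cs hIH hdesc hb'
          rwa [cs.simple_mul_simple_cancel_left] at this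


/-- The main induction: staircase and interval properties for `z ∈ [u, xv]`. -/
theorem mainInd (σ : List B) (hσ : cs.IsReduced σ) :
    ∀ ω : List B, cs.IsReduced ω → ∀ u z : W, π ω = downLWord cs σ u →
      BruhatLE cs u z → BruhatLE cs z ((π σ)⁻¹ * π ω) →
      ℓ (z * (π ω)⁻¹) + ω.length = ℓ z ∧
      BruhatLE cs (z * (π ω)⁻¹) (π σ)⁻¹ ∧
      BruhatLE cs (u * (π ω)⁻¹) (z * (π ω)⁻¹) := by
  intro ω
  induction ω using List.reverseRecOn with
  | nil =>
      intro _ u z h0 huz hz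
      simp only [cs.wordProd_nil, inv_one, mul_one, List.length_nil] at hz ⊢
      exact ⟨by omega, hz, huz⟩
  | append_singleton ω' e ih =>
      intro hred u z h0 huz hz
      have hred' : cs.IsReduced ω' := by
        have h1 : (ω' ++ [e]).take ω'.length = ω' := List.take_left
        rw [← h1]
        exact hred.take _
      have hπ : π (ω' ++ [e]) = π ω' * s e := by
        rw [cs.wordProd_append, cs.wordProd_singleton]
      have hℓv : ℓ (π (ω' ++ [e])) = ω'.length + 1 := by
        rw [hred, List.length_append, List.length_singleton]
      have hℓω' : ℓ (π ω') = ω'.length := hred'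
      have hcancel : π (ω' ++ [e]) * s e = π ω' := by
        rw [hπ, cs.simple_mul_simple_cancel_right]
      have hdesc_v : ℓ (π (ω' ++ [e]) * s e) < ℓ (π (ω' ++ [e])) := by
        rw [hcancel]
        omega
      -- fold identities
      have hfold : downLWord cs σ (u * s e) = downLWord cs σ u * s e := by
        apply downLWord_mul_simple
        rw [← h0]
        exact hdesc_v
      have hfold2 : downLWord cs σ (u * s e) = π ω' := by
        rw [hfold, ← h0, hcancel]
      -- lengths of x * v and x * (v s e)
      obtain ⟨hA, _, hU⟩ := downLWord_main cs σ hσ u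
      rw [← h0] at hA hU
      obtain ⟨hA', _, _⟩ := downLWord_main cs σ hσ (u * s e)
      rw [hfold2] at hA'
      -- descent of X(:= (π σ)⁻¹ * π (ω'++[e])) at e
      have hXcancel : (π σ)⁻¹ * π (ω' ++ [e]) * s e = (π σ)⁻¹ * π ω' := by
        rw [mul_assoc, hcancel]
      have hdesc_X : ℓ ((π σ)⁻¹ * π (ω' ++ [e]) * s e) < ℓ ((π σ)⁻¹ * π (ω' ++ [e])) := by
        rw [hXcancel, hA, hA']
        omega
      -- every element of [u, X] has e as a right descent
      have hdesc_any : ∀ y : W, BruhatLE cs u y → BruhatLE cs y ((π σ)⁻¹ * π (ω' ++ [e])) →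
          ℓ (y * s e) < ℓ y := by
        intro y h1 h2
        by_contra hc
        have hasc : ℓ y < ℓ (y * s e) := by
          rcases cs.length_mul_simple y e with h' | h' <;> omega
        have h3 := liftDesc1 cs h2 hdesc_X hasc
        rw [hXcancel] at h3
        have h4 := downLWord_min cs σ u (π ω') (BruhatLE.le_trans cs h1 h3)
        have h5 := BruhatLE.length_le cs h4
        rw [← h0] at h5
        omega
      have hdesc_z : ℓ (z * s e) < ℓ z := hdesc_any z huz hz
      have hdesc_u : ℓ (u * s e) < ℓ u := hdesc_any u (BruhatLE.refl cs u) hU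
      -- lift down
      have huz' : BruhatLE cs (u * s e) (z * s e) := liftBoth cs huz hdesc_u hdesc_z
      have hz' : BruhatLE cs (z * s e) ((π σ)⁻¹ * π ω') := by
        have := liftBoth cs hz hdesc_z hdesc_X
        rwa [hXcancel] at this
      obtain ⟨E1, E2, E3⟩ := ih hred' (u * s e) (z * s e) hfold2.symm huz' hz'
      -- algebraic identities
      have hide : ∀ y : W, y * s e * (π ω')⁻¹ = y * (π (ω' ++ [e]))⁻¹ := by
        intro y
        rw [hπ, mul_inv_rev, cs.inv_simple, mul_assoc]
      rw [hide] at E1 E2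
      rw [hide, hide] at E3
      have hlen_z : ℓ (z * s e) + 1 = ℓ z := by
        rcases cs.length_mul_simple z e with h' | h' <;> omega
      refine ⟨?_, E2, E3⟩
      rw [List.length_append, List.length_singleton]
      omega



/-- The "ladder" proposition: with `v = U_{w⁻¹} ↓ u`, `m = uv⁻¹`, and `v = s_1 ⋯ s_k`
a reduced expression, one has `ℓ(wv) = ℓ(w) + ℓ(v)`; the set `{z : u ≤ z, zv⁻¹ ≤ w}`
equals the Bruhat interval `[u, wv]`; the chain `w < ws_1 < ⋯ < ws_1⋯s_k = wv` is
increasing; for `z ∈ [u, wv]` the chain `z > zs_k > ⋯ > zs_k⋯s_1 = zv⁻¹` is decreasing;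
and `u s_k ⋯ s_{r+1} = m s_1 ⋯ s_r ≤ z s_k ⋯ s_{r+1} ≤ w s_1 ⋯ s_r` for `0 ≤ r ≤ k`.
Here `s_1 ⋯ s_r` is `π (ω.take r)` and `s_k ⋯ s_{r+1}` is `(π (ω.drop r))⁻¹`. -/
theorem stmt17 [Finite W] (u w v m : W) (hv : v = downL cs w⁻¹ u) (hm : m = u * v⁻¹)
    (ω : List B) (hred : cs.IsReduced ω) (hω : cs.wordProd ω = v) :
    cs.length (w * v) = cs.length w + cs.length v ∧
    {z : W | BruhatLE cs u z ∧ BruhatLE cs (z * v⁻¹) w} =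
      {z : W | BruhatLE cs u z ∧ BruhatLE cs z (w * v)} ∧
    (∀ r < ω.length,
      BruhatLT cs (w * cs.wordProd (ω.take r)) (w * cs.wordProd (ω.take (r + 1)))) ∧
    (∀ z : W, BruhatLE cs u z → BruhatLE cs z (w * v) → ∀ r < ω.length,
      BruhatLT cs (z * (cs.wordProd (ω.drop r))⁻¹) (z * (cs.wordProd (ω.drop (r + 1)))⁻¹)) ∧
    (∀ z : W, BruhatLE cs u z → BruhatLE cs z (w * v) → ∀ r ≤ ω.length,
      u * (cs.wordProd (ω.drop r))⁻¹ = m * cs.wordProd (ω.take r) ∧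
      BruhatLE cs (m * cs.wordProd (ω.take r)) (z * (cs.wordProd (ω.drop r))⁻¹) ∧
      BruhatLE cs (z * (cs.wordProd (ω.drop r))⁻¹) (w * cs.wordProd (ω.take r))) := by
  classical
  have hσred : cs.IsReduced (rword cs w⁻¹) := rword_isReduced cs w⁻¹
  have hσπ : π (rword cs w⁻¹) = w⁻¹ := rword_wordProd cs w⁻¹
  have hxw : (π (rword cs w⁻¹))⁻¹ = w := by rw [hσπ, inv_inv]
  have hvdef : v = downLWord cs (rword cs w⁻¹) u := hv
  have hkv : ℓ v = ω.length := by rw [← hω]; exact hred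
  have hσlen : (rword cs w⁻¹).length = ℓ w := by
    have h1 := hσred
    unfold CoxeterSystem.IsReduced at h1
    rw [hσπ, cs.length_inv] at h1
    omega
  obtain ⟨hfull, hstair_u, hUle⟩ := by
    have h := downLWord_main cs (rword cs w⁻¹) hσred u
    rw [← hvdef, hxw] at h
    exact h
  -- (1)
  have goal1 : ℓ (w * v) = ℓ w + ℓ v := by rw [hfull, hσlen]
  -- full length with word ω
  have hwωfull : ℓ (w * π ω) = ℓ w + ω.length := by
    rw [hω, goal1, hkv]
  -- mainInd specialized
  have hMI : ∀ z : W, BruhatLE cs u z → BruhatLE cs z (w * v) →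
      ℓ (z * v⁻¹) + ℓ v = ℓ z ∧ BruhatLE cs (z * v⁻¹) w ∧
      BruhatLE cs (u * v⁻¹) (z * v⁻¹) := by
    intro z h1 h2
    have h3 := mainInd cs (rword cs w⁻¹) hσred ω hred u z (by rw [hω, hvdef]) h1
      (by rw [hω, hxw]; exact h2)
    rw [hω, hxw, ← hkv] at h3
    exact h3
  -- decompositions
  have hdrop : ∀ r : ℕ, (π (ω.drop r))⁻¹ = v⁻¹ * π (ω.take r) := by
    intro r
    have h1 : π (ω.take r) * π (ω.drop r) = v := by
      rw [← cs.wordProd_append, List.take_append_drop, hω]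
    rw [← h1]
    group
  have hzdrop : ∀ z : W, ∀ r : ℕ, z * (π (ω.drop r))⁻¹ = (z * v⁻¹) * π (ω.take r) := by
    intro z r
    rw [hdrop, mul_assoc]
  have htakelen : ∀ r : ℕ, r ≤ ω.length → (ω.take r).length = r := by
    intro r hr
    rw [List.length_take]
    omega
  -- prefix staircases
  have hwtake : ∀ r : ℕ, r ≤ ω.length → ℓ (w * π (ω.take r)) = ℓ w + r :=
    fun r hr => length_mul_take cs hwωfull r hr
  -- take successor identity
  have htakesucc : ∀ r : ℕ, ∀ hr : r < ω.length,
      π (ω.take (r + 1)) = π (ω.take r) * s (ω[r]'hr) := by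
    intro r hr
    have htake : ω.take (r + 1) = ω.take r ++ [ω[r]] := by
      rw [← List.take_concat_get hr]
      simp [List.concat_eq_append, List.get_eq_getElem]
    rw [htake, cs.wordProd_append, cs.wordProd_singleton]
  refine ⟨goal1, ?_, ?_, ?_, ?_⟩
  · -- (2) set equality
    ext z
    simp only [Set.mem_setOf_eq]
    constructor
    · rintro ⟨h1, h2⟩
      refine ⟨h1, ?_⟩
      have h3 := le_mul_word cs h2 ω hwωfull
      rw [hω, inv_mul_cancel_right] at h3
      exact h3
    · rintro ⟨h1, h2⟩
      exact ⟨h1, (hMI z h1 h2).2.1⟩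
  · -- (3) increasing chain from w
    intro r hr
    have h1 : ℓ (w * π (ω.take r)) = ℓ w + r := hwtake r (by omega)
    have h2 : ℓ (w * π (ω.take (r + 1))) = ℓ w + r + 1 := by
      rw [hwtake (r + 1) (by omega)]
      omega
    rw [htakesucc r hr] at h2 ⊢
    rw [← mul_assoc] at h2 ⊢
    exact lt_mul_simple cs (by omega)
  · -- (4) decreasing chain from z
    intro z h1 h2 r hr
    obtain ⟨hst, hzw, hmz⟩ := hMI z h1 h2
    have hzfull : ℓ ((z * v⁻¹) * π ω) = ℓ (z * v⁻¹) + ω.length := by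
      rw [hω, inv_mul_cancel_right]
      omega
    have g1 : ℓ ((z * v⁻¹) * π (ω.take r)) = ℓ (z * v⁻¹) + r :=
      length_mul_take cs hzfull r (by omega)
    have g2 : ℓ ((z * v⁻¹) * π (ω.take (r + 1))) = ℓ (z * v⁻¹) + r + 1 := by
      rw [length_mul_take cs hzfull (r + 1) (by omega)]
      omega
    rw [hzdrop z r, hzdrop z (r + 1)]
    rw [htakesucc r hr] at g2 ⊢
    rw [← mul_assoc] at g2 ⊢
    exact lt_mul_simple cs (by omega)
  · -- (5) sandwich
    intro z h1 h2 r hr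
    obtain ⟨hst, hzw, hmz⟩ := hMI z h1 h2
    have hzfull : ℓ ((z * v⁻¹) * π ω) = ℓ (z * v⁻¹) + ω.length := by
      rw [hω, inv_mul_cancel_right]
      omega
    refine ⟨?_, ?_, ?_⟩
    · rw [hzdrop u r, hm]
    · rw [hzdrop z r, hm]
      have h3 := le_mul_word cs hmz (ω.take r) (by
        rw [length_mul_take cs hzfull r hr, htakelen r hr])
      exact h3
    · rw [hzdrop z r]
      have h3 := le_mul_word cs hzw (ω.take r) (by
        rw [hwtake r hr, htakelen r hr])
      exact h3


end PaperBase
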